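/- Fix N ≥ 2, real numbers λ_1 > λ_2 ≥ λ_3 ≥ … ≥ λ_N and real numbers c_1, …, c_N with ∑_{k=1}^{N} c_k² = 1, c_1 ≠ 0 and c_2 ≠ 0. Define D(t) = ∑_{k=1}^{N} c_k² e^{2λ_k t}, m(t) = (∑_{j} λ_j c_j² e^{2λ_j t})/D(t), and E(t) = (∑_{j} (λ_j − m(t))² c_j² e^{2λ_j t})/D(t). Then (1/t) · log E(t) → −2(λ_1 − λ_2) as t → ∞. -/

import Mathlib

/-!
`E(t)` is the variance of `λ` under the weights `w_k(t) = c_k² e^{2λ_k t}`, and the pair formula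
`Var = ½ ∑_{j,k} w_j w_k (λ_j - λ_k)² / (∑ w)²` writes it as a ratio of exponential sums.
Among the pairs with `λ_j ≠ λ_k` the largest exponent is `2(λ₁ + λ₂)`, reached by `(1, 2)` with
a positive coefficient since `c₁ c₂ ≠ 0`, while `∑ w ~ c₁² e^{2λ₁ t}`. Hence
`E(t) e^{2(λ₁ - λ₂)t}` has a positive limit, and taking logarithms gives the rate.
-/

open Finset Filter Topology Real

section WeightedVariance

variable {ι : Type*} [Fintype ι]

noncomputable def weightedMean (w x : ι → ℝ) : ℝ := (∑ i, x i * w i) / ∑ i, w i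

noncomputable def weightedVariance (w x : ι → ℝ) : ℝ :=
  (∑ i, (x i - weightedMean w x) ^ 2 * w i) / ∑ i, w i

lemma weightedVariance_eq_sum_sum_sq_sub {w : ι → ℝ} (hw : ∑ i, w i ≠ 0) (x : ι → ℝ) :
    weightedVariance w x = (∑ i, ∑ j, w i * w j * (x i - x j) ^ 2) / 2 / (∑ i, w i) ^ 2 := by
  have hvar : ∀ i, (x i - weightedMean w x) ^ 2 * w i = x i ^ 2 * w i
      - 2 * weightedMean w x * (x i * w i) + weightedMean w x ^ 2 * w i := by
    intro i; ring
  have hpair : ∀ i j, w i * w j * (x i - x j) ^ 2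
      = x i ^ 2 * w i * w j - 2 * ((x i * w i) * (x j * w j)) + w i * (x j ^ 2 * w j) := by
    intro i j; ring
  rw [weightedVariance]
  simp_rw [hvar, hpair, sum_add_distrib, sum_sub_distrib, ← mul_sum, ← sum_mul, weightedMean]
  field_simp
  ring

end WeightedVariance

lemma tendsto_sum_mul_exp_mul_exp_neg {ι : Type*} {s : Finset ι} {a b : ι → ℝ} {β : ℝ}
    (h : ∀ i ∈ s, a i ≠ 0 → b i ≤ β) :
    Tendsto (fun t => (∑ i ∈ s, a i * exp (b i * t)) * exp (-(β * t))) atTop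
      (𝓝 (∑ i ∈ s with b i = β, a i)) := by
  have hshift : ∀ t, (∑ i ∈ s, a i * exp (b i * t)) * exp (-(β * t))
      = ∑ i ∈ s, a i * exp ((b i - β) * t) := by
    intro t
    rw [sum_mul]
    refine sum_congr rfl fun i _ => ?_
    rw [mul_assoc, ← exp_add, sub_mul, sub_eq_add_neg]
  simp_rw [hshift, sum_filter]
  refine tendsto_finsetSum _ fun i hi => ?_
  by_cases ha : a i = 0
  · simp [ha]
  rcases (h i hi ha).lt_or_eq with hlt | heq
  · rw [if_neg hlt.ne]
    have hexp : Tendsto (fun t => exp ((b i - β) * t)) atTop (𝓝 0) :=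
      tendsto_exp_atBot.comp (tendsto_id.const_mul_atTop_of_neg (sub_neg.mpr hlt))
    simpa using hexp.const_mul (a i)
  · simp [heq]

lemma tendsto_log_div_of_tendsto_mul_exp {f : ℝ → ℝ} {a S : ℝ} (hS : 0 < S)
    (hf : Tendsto (fun t => f t * exp (a * t)) atTop (𝓝 S)) :
    Tendsto (fun t => log (f t) / t) atTop (𝓝 (-a)) := by
  have hlog : Tendsto (fun t => log (f t * exp (a * t)) / t - a) atTop (𝓝 (0 - a)) :=
    (((continuousAt_log hS.ne').tendsto.comp hf).div_atTop tendsto_id).sub_const a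
  rw [zero_sub] at hlog
  refine hlog.congr' ?_
  filter_upwards [hf.eventually (eventually_gt_nhds hS), eventually_gt_atTop 0] with t hpos ht
  have hft : 0 < f t := pos_of_mul_pos_left hpos (exp_pos _).le
  rw [log_mul hft.ne' (exp_pos _).ne', log_exp]
  field_simp
  ring

section SpectralGap

variable {ι : Type*} [Fintype ι] {lam c : ι → ℝ} {i₀ i₁ : ι}

noncomputable def spectralWeight (lam c : ι → ℝ) (t : ℝ) (k : ι) : ℝ :=
  c k ^ 2 * exp (2 * lam k * t)

lemma exists_pos_tendsto_sum_spectralWeight_mul_exp (hc₀ : c i₀ ≠ 0)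
    (htop : ∀ k, lam k ≤ lam i₀) :
    ∃ L > 0, Tendsto (fun t => (∑ k, spectralWeight lam c t k) * exp (-(2 * lam i₀ * t)))
      atTop (𝓝 L) := by
  refine ⟨_, ?_, tendsto_sum_mul_exp_mul_exp_neg fun k _ _ => by linarith [htop k]⟩
  exact sum_pos' (fun k _ => sq_nonneg _)
    ⟨i₀, mem_filter.mpr ⟨mem_univ _, rfl⟩, by positivity⟩

lemma exists_pos_tendsto_sum_sum_spectralWeight_mul_exp (hgap : lam i₁ < lam i₀)
    (htop : ∀ k ≠ i₀, lam k ≤ lam i₁) (hc₀ : c i₀ ≠ 0) (hc₁ : c i₁ ≠ 0) :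
    ∃ L > 0, Tendsto (fun t => (∑ i, ∑ j, spectralWeight lam c t i * spectralWeight lam c t j *
        (lam i - lam j) ^ 2) * exp (-(2 * (lam i₀ + lam i₁) * t))) atTop (𝓝 L) := by
  set a : ι × ι → ℝ := fun p => c p.1 ^ 2 * c p.2 ^ 2 * (lam p.1 - lam p.2) ^ 2
  set b : ι × ι → ℝ := fun p => 2 * (lam p.1 + lam p.2)
  have hpairs : ∀ t, ∑ i, ∑ j, spectralWeight lam c t i * spectralWeight lam c t j *
      (lam i - lam j) ^ 2 = ∑ p, a p * exp (b p * t) := by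
    intro t
    rw [← Fintype.sum_prod_type']
    refine sum_congr rfl fun p _ => ?_
    rw [spectralWeight, spectralWeight, show b p * t = 2 * lam p.1 * t + 2 * lam p.2 * t by ring,
      exp_add]
    ring
  simp_rw [hpairs]
  -- only pairs made of `i₀` and an index at level `lam i₁` reach the top exponent
  have hexp : ∀ p ∈ univ, a p ≠ 0 → b p ≤ 2 * (lam i₀ + lam i₁) := by
    rintro ⟨i, j⟩ - hp
    have hij : lam i ≠ lam j := fun h => hp (by simp [a, h])
    suffices lam i + lam j ≤ lam i₀ + lam i₁ by simp only [b]; linarith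
    by_cases hi : i = i₀ <;> by_cases hj : j = i₀
    · simp [hi, hj] at hij
    · subst hi; linarith [htop j hj]
    · subst hj; linarith [htop i hi]
    · linarith [htop i hi, htop j hj]
  refine ⟨_, ?_, tendsto_sum_mul_exp_mul_exp_neg hexp⟩
  refine sum_pos' (fun p _ => by positivity) ⟨(i₀, i₁), by simp [b], ?_⟩
  have : lam i₀ - lam i₁ ≠ 0 := by linarith
  simp only [a]
  positivity

theorem tendsto_log_weightedVariance_spectralWeight_div (hgap : lam i₁ < lam i₀)
    (htop : ∀ k ≠ i₀, lam k ≤ lam i₁) (hc₀ : c i₀ ≠ 0) (hc₁ : c i₁ ≠ 0) :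
    Tendsto (fun t => log (weightedVariance (spectralWeight lam c t) lam) / t) atTop
      (𝓝 (-(2 * (lam i₀ - lam i₁)))) := by
  have hmass : ∀ t, 0 < ∑ k, spectralWeight lam c t k := fun t =>
    sum_pos' (fun k _ => by unfold spectralWeight; positivity)
      ⟨i₀, mem_univ _, by unfold spectralWeight; positivity⟩
  obtain ⟨P, hP, hPlim⟩ := exists_pos_tendsto_sum_sum_spectralWeight_mul_exp hgap htop hc₀ hc₁
  obtain ⟨Q, hQ, hQlim⟩ := exists_pos_tendsto_sum_spectralWeight_mul_exp (c := c) hc₀ fun k => by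
    by_cases hk : k = i₀
    · rw [hk]
    · linarith [htop k hk]
  have hlim := (hPlim.div_const 2).div (hQlim.pow 2) (by positivity)
  refine tendsto_log_div_of_tendsto_mul_exp (by positivity) (hlim.congr fun t => ?_)
  have hexp : exp (-(2 * (lam i₀ + lam i₁) * t))
      = exp (2 * (lam i₀ - lam i₁) * t) * exp (-(2 * lam i₀ * t)) ^ 2 := by
    rw [sq, ← exp_add, ← exp_add]
    ring_nf
  have hexp₀ := exp_pos (-(2 * lam i₀ * t))
  simp only [Pi.div_apply]
  rw [hexp, weightedVariance_eq_sum_sum_sq_sub (hmass t).ne']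
  generalize (∑ i : ι, ∑ j : ι, (_ : ℝ)) = S
  field_simp

end SpectralGap

/-- **Exponential decay rate of the energy is twice the top spectral gap.**
Let `N ≥ 2`, `lam 0 > lam 1 ≥ lam 2 ≥ … ≥ lam (N-1)`, and let `c` be weights with
`∑ c k ^ 2 = 1`, `c 0 ≠ 0`, `c 1 ≠ 0`.  With `D`, `m`, `E` as in formulas (6)–(7),
`(log E t)/t → -2 (lam 0 - lam 1)` as `t → ∞`. -/
theorem E_decay_rate (N : ℕ) (hN : 2 ≤ N)
    (lam c : Fin N → ℝ)
    (hgap : lam ⟨1, hN⟩ < lam ⟨0, by omega⟩)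
    (hord : ∀ j k : Fin N, 1 ≤ (j : ℕ) → j ≤ k → lam k ≤ lam j)
    (hc1 : c ⟨0, by omega⟩ ≠ 0) (hc2 : c ⟨1, hN⟩ ≠ 0)
    (D : ℝ → ℝ) (hD : ∀ t, D t = ∑ k, (c k) ^ 2 * Real.exp (2 * lam k * t))
    (m : ℝ → ℝ)
    (hm : ∀ t, m t = (∑ j, lam j * (c j) ^ 2 * Real.exp (2 * lam j * t)) / D t)
    (E : ℝ → ℝ)
    (hE : ∀ t, E t = (∑ j, (lam j - m t) ^ 2 * (c j) ^ 2 * Real.exp (2 * lam j * t)) / D t) :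
    Tendsto (fun t => Real.log (E t) / t) atTop
      (nhds (-2 * (lam ⟨0, by omega⟩ - lam ⟨1, hN⟩))) := by
  have htop : ∀ k ≠ ⟨0, by omega⟩, lam k ≤ lam ⟨1, hN⟩ := fun k hk =>
    hord _ k le_rfl (Fin.le_def.mpr (Nat.one_le_iff_ne_zero.mpr fun h => hk (Fin.ext h)))
  have hE' : E = fun t => weightedVariance (spectralWeight lam c t) lam := by
    funext t
    simp only [hE, hm, hD, weightedVariance, weightedMean, spectralWeight, mul_assoc]
  rw [hE', neg_mul]
  exact tendsto_log_weightedVariance_spectralWeight_div hgap htop hc1 hc2
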